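/- arXiv:2109.06685 — 2 statements merged into one kernel-verified Lean document; each statement's English description precedes it below -/
import Mathlib

section
/- Let q and q′ be Lorentzian quadratic forms on a real vector space V of dimension n+1 (n ≥ 1). Then q ⪯ q′ if and only if q′♯ ⪯ q♯; explicitly, {v ∈ V : q(v) < 0} ⊆ {v ∈ V : q′(v) < 0} holds if and only if {ω ∈ V* : q′♯(ω) < 0} ⊆ {ω ∈ V* : q♯(ω) < 0}. (Lemma 2.8, part (3): the cone-inclusion relation is reversed on dual forms.) -/
/-- The standard Minkowski quadratic form of signature `(-,+,…,+)` on `ℝ^(n+1)`. -/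
def mink (n : ℕ) (x : Fin (n + 1) → ℝ) : ℝ :=
  ∑ i, (if i = 0 then (-1 : ℝ) else 1) * x i ^ 2

/-- A function `f : V → ℝ` is Lorentzian if it is equivalent (isometric) to the
standard Minkowski quadratic form on `ℝ^(n+1)`. -/
def IsLorentzian {V : Type*} [AddCommGroup V] [Module ℝ V] (n : ℕ) (f : V → ℝ) : Prop :=
  ∃ e : (Fin (n + 1) → ℝ) ≃ₗ[ℝ] V, ∀ x, f (e x) = mink n x

/-- The polar (associated symmetric bilinear) form `B` of a quadratic form `q`,
normalized so that `B(v,v) = q(v)`. -/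
noncomputable def polarForm {V : Type*} [AddCommGroup V] [Module ℝ V]
    (q : QuadraticForm ℝ V) (v w : V) : ℝ :=
  (q (v + w) - q v - q w) / 2

private lemma lemP {A B C : ℝ} (h : ∀ s : ℝ, 0 < s → A + B * s + C * s ^ 2 < 0) : A ≤ 0 := by
  have cont : Continuous fun s : ℝ => A + B * s + C * s ^ 2 := by continuity
  have tend : Filter.Tendsto (fun s : ℝ => A + B * s + C * s ^ 2)
      (nhdsWithin 0 (Set.Ioi 0)) (nhds A) := by
    have h0 := (cont.tendsto 0).mono_left (nhdsWithin_le_nhds (s := Set.Ioi (0 : ℝ)))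
    simpa using h0
  exact le_of_tendsto tend (eventually_nhdsWithin_of_forall (fun s hs => (h s hs).le))

private lemma mink_eq (n : ℕ) (a : Fin (n + 1) → ℝ) :
    mink n a = -(a 0) ^ 2 + ∑ i ∈ Finset.univ.erase 0, (a i) ^ 2 := by
  rw [mink, ← Finset.add_sum_erase _ _ (Finset.mem_univ 0)]
  congr 1
  · simp
  · refine Finset.sum_congr rfl fun i hi => ?_
    rw [if_neg (Finset.ne_of_mem_erase hi), one_mul]

private lemma mink_x0 {n : ℕ} {x : Fin (n + 1) → ℝ} (hx : mink n x ≤ 0) (h0 : x 0 = 0) :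
    x = 0 := by
  have hnn : ∀ j ∈ Finset.univ.erase (0 : Fin (n + 1)), (0 : ℝ) ≤ x j ^ 2 :=
    fun j _ => sq_nonneg _
  have hs : ∑ i ∈ Finset.univ.erase (0 : Fin (n + 1)), x i ^ 2 ≤ 0 := by
    rw [mink_eq, h0] at hx; simpa using hx
  have hz := (Finset.sum_eq_zero_iff_of_nonneg hnn).1 (le_antisymm hs (Finset.sum_nonneg hnn))
  funext i
  rcases eq_or_ne i 0 with hi | hi
  · rw [hi, h0]; rfl
  · have h1 := hz i (Finset.mem_erase.2 ⟨hi, Finset.mem_univ _⟩)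
    simpa using sq_eq_zero_iff.mp h1

private lemma minkM (n : ℕ) (a : Fin (n + 1) → ℝ) :
    mink n a < 0 ↔ ∀ x : Fin (n + 1) → ℝ, x ≠ 0 → mink n x ≤ 0 → ∑ i, a i * x i ≠ 0 := by
  constructor
  · intro ha x hx hxm hax
    have hx0 : x 0 ≠ 0 := fun h0 => hx (mink_x0 hxm h0)
    have hx02 : 0 < x 0 ^ 2 := by positivity
    have hsplit := Finset.add_sum_erase Finset.univ (fun i => a i * x i)
      (Finset.mem_univ (0 : Fin (n + 1)))
    rw [hax] at hsplit
    have hcs := Finset.sum_mul_sq_le_sq_mul_sq (Finset.univ.erase (0 : Fin (n + 1))) a x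
    have hSa : (0 : ℝ) ≤ ∑ i ∈ Finset.univ.erase (0 : Fin (n + 1)), a i ^ 2 :=
      Finset.sum_nonneg fun j _ => sq_nonneg _
    rw [mink_eq] at ha hxm
    have hsplit2 : a 0 * x 0 + ∑ i ∈ Finset.univ.erase (0 : Fin (n + 1)), a i * x i = 0 :=
      hsplit
    have hP : ∑ i ∈ Finset.univ.erase (0 : Fin (n + 1)), a i * x i = -(a 0 * x 0) := by
      linarith [hsplit2]
    have hchain : (a 0 * x 0) ^ 2 < a 0 ^ 2 * x 0 ^ 2 := by
      calc (a 0 * x 0) ^ 2 = (∑ i ∈ Finset.univ.erase (0 : Fin (n + 1)), a i * x i) ^ 2 := by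
            rw [hP]; ring
        _ ≤ (∑ i ∈ Finset.univ.erase (0 : Fin (n + 1)), a i ^ 2) *
              ∑ i ∈ Finset.univ.erase (0 : Fin (n + 1)), x i ^ 2 := hcs
        _ ≤ (∑ i ∈ Finset.univ.erase (0 : Fin (n + 1)), a i ^ 2) * x 0 ^ 2 :=
            mul_le_mul_of_nonneg_left (by linarith) hSa
        _ < a 0 ^ 2 * x 0 ^ 2 := mul_lt_mul_of_pos_right (by linarith) hx02
    nlinarith [hchain]
  · intro h
    by_contra hna
    push_neg at hna
    rw [mink_eq] at hna
    set Sa : ℝ := ∑ i ∈ Finset.univ.erase (0 : Fin (n + 1)), a i ^ 2 with hSadef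
    have hSa0 : (0 : ℝ) ≤ Sa := Finset.sum_nonneg fun j _ => sq_nonneg _
    rcases eq_or_lt_of_le hSa0 with hz | hpos
    · -- Sa = 0, so a 0 = 0; use x = Pi.single 0 1
      have ha0 : a 0 = 0 := by nlinarith
      refine h ((Pi.single (0 : Fin (n + 1)) (1 : ℝ)) : Fin (n + 1) → ℝ)
        (fun hh => by simpa using congrFun hh 0) ?_ ?_
      · rw [mink_eq]
        have hzero : ∀ i ∈ Finset.univ.erase (0 : Fin (n + 1)),
            ((Pi.single (0 : Fin (n + 1)) (1 : ℝ) : Fin (n + 1) → ℝ) i) ^ 2 = 0 := by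
          intro i hi
          rw [Pi.single_eq_of_ne (Finset.ne_of_mem_erase hi)]
          norm_num
        rw [Finset.sum_congr rfl hzero]
        simp
      · rw [Finset.sum_eq_single (0 : Fin (n + 1)) (fun j _ hj => by
          rw [Pi.single_eq_of_ne hj, mul_zero]) (fun hh => absurd (Finset.mem_univ _) hh)]
        simp [ha0]
    · -- Sa > 0 : use x 0 = Sa, x i = -(a 0) * a i
      set x : Fin (n + 1) → ℝ := fun i => if i = 0 then Sa else -(a 0) * a i with hxdef
      have hx0 : x 0 = Sa := if_pos rfl
      have hxi : ∀ i ∈ Finset.univ.erase (0 : Fin (n + 1)), x i = -(a 0) * a i :=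
        fun i hi => if_neg (Finset.ne_of_mem_erase hi)
      refine h x (fun hh => by
        have h2 := congrFun hh 0
        rw [hx0] at h2
        exact absurd h2 (by simpa using hpos.ne')) ?_ ?_
      · rw [mink_eq, hx0]
        have hsum : ∑ i ∈ Finset.univ.erase (0 : Fin (n + 1)), x i ^ 2 = a 0 ^ 2 * Sa := by
          rw [hSadef, Finset.mul_sum]
          refine Finset.sum_congr rfl fun i hi => ?_
          rw [hxi i hi]; ring
        rw [hsum]
        nlinarith
      · rw [← Finset.add_sum_erase _ _ (Finset.mem_univ (0 : Fin (n + 1))), hx0]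
        have hsum : ∑ i ∈ Finset.univ.erase (0 : Fin (n + 1)), a i * x i = -(a 0) * Sa := by
          rw [hSadef, Finset.mul_sum]
          refine Finset.sum_congr rfl fun i hi => ?_
          rw [hxi i hi]; ring
        rw [hsum]; ring

section Helpers

variable {V : Type*} [AddCommGroup V] [Module ℝ V]

private lemma polarForm_eq (q : QuadraticForm ℝ V) (v w : V) :
    polarForm q v w = QuadraticMap.polar ⇑q v w / 2 := rfl

private lemma polarForm_self (q : QuadraticForm ℝ V) (u : V) :
    polarForm q u u = q u := by
  have h2 : q (u + u) = 4 * q u := by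
    rw [← two_smul ℝ u, QuadraticMap.map_smul]
    norm_num
  rw [polarForm, h2]; ring

private lemma polarForm_comm (q : QuadraticForm ℝ V) (v w : V) :
    polarForm q v w = polarForm q w v := by
  rw [polarForm, polarForm, add_comm]
  ring

private lemma polarForm_sub_left (q : QuadraticForm ℝ V) (u u' w : V) :
    polarForm q (u - u') w = polarForm q u w - polarForm q u' w := by
  rw [polarForm_eq, polarForm_eq, polarForm_eq, QuadraticMap.polar_sub_left]
  ring

end Helpers

private lemma dualChar {n : ℕ} {V : Type*} [AddCommGroup V] [Module ℝ V]
    (q : QuadraticForm ℝ V) (hq : IsLorentzian n ⇑q)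
    (sharp : (V →ₗ[ℝ] ℝ) ≃ₗ[ℝ] V)
    (hsharp : ∀ (ω : V →ₗ[ℝ] ℝ) (v : V), polarForm q (sharp ω) v = ω v)
    (ω : V →ₗ[ℝ] ℝ) :
    ω (sharp ω) < 0 ↔ ∀ v : V, v ≠ 0 → q v ≤ 0 → ω v ≠ 0 := by
  obtain ⟨e, he⟩ := hq
  -- the polar form in coordinates
  have hbm : ∀ y x : Fin (n + 1) → ℝ, polarForm q (e y) (e x) =
      ∑ i, (if i = 0 then (-1 : ℝ) else 1) * (y i * x i) := by
    intro y x
    have hadd : e y + e x = e (y + x) := (map_add e y x).symm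
    rw [polarForm, hadd, he, he, he, mink, mink, mink,
      ← Finset.sum_sub_distrib, ← Finset.sum_sub_distrib, Finset.sum_div]
    refine Finset.sum_congr rfl fun i _ => ?_
    have : (y + x) i = y i + x i := rfl
    rw [this]; ring
  -- coordinates of ω
  set a : Fin (n + 1) → ℝ := fun i => ω (e fun j => if i = j then 1 else 0) with ha
  have hωe : ∀ x, ω (e x) = ∑ i, x i * a i := by
    intro x
    have h1 := LinearMap.pi_apply_eq_sum_univ (ω.comp (e : (Fin (n + 1) → ℝ) →ₗ[ℝ] V)) x
    simpa [smul_eq_mul] using h1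
  -- injectivity of the polar pairing
  have hinj : ∀ u : V, (∀ v, polarForm q u v = 0) → u = 0 := by
    intro u hu
    have hy : ∀ x : Fin (n + 1) → ℝ, ∑ i, (if i = 0 then (-1 : ℝ) else 1) * (e.symm u i * x i) = 0 := by
      intro x
      have h2 : polarForm q (e (e.symm u)) (e x) = 0 := by
        rw [e.apply_symm_apply]; exact hu (e x)
      rw [hbm] at h2; exact h2
    have hy0 : ∀ i, e.symm u i = 0 := by
      intro i
      have h1 := hy (fun j => if j = i then (1 : ℝ) else 0)
      rw [Finset.sum_eq_single i (fun j _ hj => by simp [hj])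
        (fun hh => absurd (Finset.mem_univ i) hh)] at h1
      rcases eq_or_ne i 0 with hi | hi <;> simpa [hi] using h1
    have hzero : e.symm u = 0 := funext hy0
    calc u = e (e.symm u) := (e.apply_symm_apply u).symm
      _ = 0 := by rw [hzero, map_zero]
  -- identify sharp ω
  set Ja : Fin (n + 1) → ℝ := fun i => (if i = 0 then (-1 : ℝ) else 1) * a i with hJa
  have hJav : ∀ v : V, polarForm q (e Ja) v = ω v := by
    intro v
    have h3 := hbm Ja (e.symm v)
    rw [e.apply_symm_apply] at h3
    rw [h3]
    have h4 := hωe (e.symm v)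
    rw [e.apply_symm_apply] at h4
    rw [h4]
    refine Finset.sum_congr rfl fun i _ => ?_
    rcases eq_or_ne i 0 with hi | hi <;> simp [hJa, hi] <;> ring
  have hsharpω : sharp ω = e Ja := by
    have hz : ∀ v, polarForm q (sharp ω - e Ja) v = 0 := by
      intro v
      rw [polarForm_sub_left, hsharp, hJav, sub_self]
    exact sub_eq_zero.mp (hinj _ hz)
  have hval : ω (sharp ω) = mink n a := by
    rw [hsharpω, hωe, mink]
    refine Finset.sum_congr rfl fun i _ => ?_
    rcases eq_or_ne i 0 with hi | hi <;> simp [hJa, hi] <;> ring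
  rw [hval, minkM]
  constructor
  · intro h v hv hqv hωv
    have hx : e.symm v ≠ 0 := fun h0 => hv (by
      rw [← e.apply_symm_apply v, h0, map_zero])
    have hqx : mink n (e.symm v) ≤ 0 := by
      rw [← he, e.apply_symm_apply]; exact hqv
    refine h (e.symm v) hx hqx ?_
    have h5 := hωe (e.symm v)
    rw [e.apply_symm_apply, hωv] at h5
    exact (Finset.sum_congr rfl fun i _ => mul_comm (a i) (e.symm v i)).trans h5.symm
  · intro h x hx hqx hax
    refine h (e x) (fun h0 => hx (e.map_eq_zero_iff.mp h0)) (by rw [he]; exact hqx) ?_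
    rw [hωe, ← hax]
    exact Finset.sum_congr rfl fun i _ => mul_comm _ _

private lemma nLem {n : ℕ} {V : Type*} [AddCommGroup V] [Module ℝ V]
    (q q' : QuadraticForm ℝ V) (hq : IsLorentzian n ⇑q)
    (h : {v : V | q v < 0} ⊆ {v : V | q' v < 0}) :
    ∀ v : V, v ≠ 0 → q v ≤ 0 → q' v ≤ 0 := by
  intro v hv hqv
  rcases hqv.lt_or_eq with hlt | heq
  · exact (h hlt).le
  obtain ⟨e, he⟩ := hq
  have hev : e (e.symm v) = v := e.apply_symm_apply v
  set x : Fin (n + 1) → ℝ := e.symm v with hxdef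
  have hqx : mink n x = 0 := by rw [← he, hev]; exact heq
  have hx0 : x 0 ≠ 0 := by
    intro h0
    exact hv (by rw [← hev, mink_x0 hqx.le h0, map_zero])
  have hx02 : 0 < x 0 ^ 2 := by positivity
  set δ : Fin (n + 1) → ℝ := (Pi.single (0 : Fin (n + 1)) (x 0) : Fin (n + 1) → ℝ) with hδdef
  set w : V := e δ with hwdef
  have hkey : ∀ s : ℝ, 0 < s →
      q' v + QuadraticMap.polar ⇑q' v w * s + q' w * s ^ 2 < 0 := by
    intro s hs
    have hmem : q (v + s • w) < 0 := by
      have hrw : v + s • w = e (x + s • δ) := by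
        rw [map_add, map_smul, hev]
      rw [hrw, he]
      have heq2 : mink n (x + s • δ) - mink n x
          = -(x 0 ^ 2 * (2 * s + s ^ 2)) := by
        rw [mink, mink, ← Finset.sum_sub_distrib,
          Finset.sum_eq_single (0 : Fin (n + 1))]
        · simp only [eq_self_iff_true, if_true, Pi.add_apply, Pi.smul_apply, hδdef, Pi.single_eq_same,
            smul_eq_mul]
          ring
        · intro j _ hj
          simp [hδdef, Pi.single_eq_of_ne hj]
        · intro hh; exact absurd (Finset.mem_univ _) hh
      have : mink n (x + s • δ) = -(x 0 ^ 2 * (2 * s + s ^ 2)) := by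
        rw [← heq2, hqx]; ring
      rw [this]
      nlinarith
    have hmem' : q' (v + s • w) < 0 := h hmem
    have hexp : q' (v + s • w)
        = q' v + QuadraticMap.polar ⇑q' v w * s + q' w * s ^ 2 := by
      rw [QuadraticMap.map_add (⇑q') v (s • w), QuadraticMap.map_smul, QuadraticMap.polar_smul_right]
      simp only [smul_eq_mul]
      ring
    rwa [hexp] at hmem'
  exact lemP hkey

private lemma self_eq_comp {V : Type*} [AddCommGroup V] [Module ℝ V]
    (q : QuadraticForm ℝ V) (sharp : (V →ₗ[ℝ] ℝ) ≃ₗ[ℝ] V)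
    (hsharp : ∀ (ω : V →ₗ[ℝ] ℝ) (v : V), polarForm q (sharp ω) v = ω v)
    (ω : V →ₗ[ℝ] ℝ) :
    ω (sharp ω) = q.comp (sharp : (V →ₗ[ℝ] ℝ) →ₗ[ℝ] V) ω := by
  rw [QuadraticMap.comp_apply]
  simp only [LinearEquiv.coe_coe]
  rw [← hsharp ω (sharp ω), polarForm_self]

private lemma comp_lorentzian {n : ℕ} {V : Type*} [AddCommGroup V] [Module ℝ V]
    (q : QuadraticForm ℝ V) (hq : IsLorentzian n ⇑q)
    (sharp : (V →ₗ[ℝ] ℝ) ≃ₗ[ℝ] V) :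
    IsLorentzian n ⇑(q.comp (sharp : (V →ₗ[ℝ] ℝ) →ₗ[ℝ] V)) := by
  obtain ⟨e, he⟩ := hq
  refine ⟨e.trans sharp.symm, fun x => ?_⟩
  rw [QuadraticMap.comp_apply]
  simp only [LinearEquiv.trans_apply, LinearEquiv.coe_coe, LinearEquiv.apply_symm_apply]
  exact he x

private lemma primalChar {n : ℕ} {V : Type*} [AddCommGroup V] [Module ℝ V]
    (q : QuadraticForm ℝ V) (hq : IsLorentzian n ⇑q)
    (sharp : (V →ₗ[ℝ] ℝ) ≃ₗ[ℝ] V)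
    (hsharp : ∀ (ω : V →ₗ[ℝ] ℝ) (v : V), polarForm q (sharp ω) v = ω v)
    (v : V) :
    q v < 0 ↔ ∀ ω : V →ₗ[ℝ] ℝ, ω ≠ 0 → ω (sharp ω) ≤ 0 → ω v ≠ 0 := by
  obtain ⟨e0, -⟩ := id hq
  have : FiniteDimensional ℝ V := Module.Finite.equiv e0
  set Q : QuadraticForm ℝ (V →ₗ[ℝ] ℝ) := q.comp (sharp : (V →ₗ[ℝ] ℝ) →ₗ[ℝ] V) with hQ
  have hQL : IsLorentzian n ⇑Q := comp_lorentzian q hq sharp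
  have hself : ∀ ω, ω (sharp ω) = Q ω := self_eq_comp q sharp hsharp
  set Sharp : ((V →ₗ[ℝ] ℝ) →ₗ[ℝ] ℝ) ≃ₗ[ℝ] (V →ₗ[ℝ] ℝ) :=
    (Module.evalEquiv ℝ V).symm.trans sharp.symm with hSharp
  have hSharpPolar : ∀ (Φ : (V →ₗ[ℝ] ℝ) →ₗ[ℝ] ℝ) (η : V →ₗ[ℝ] ℝ),
      polarForm Q (Sharp Φ) η = Φ η := by
    intro Φ η
    have hpc : ∀ α β : V →ₗ[ℝ] ℝ, polarForm Q α β = polarForm q (sharp α) (sharp β) := by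
      intro α β
      rw [polarForm, polarForm, hQ]
      simp [QuadraticMap.comp_apply, map_add]
    rw [hpc]
    have h1 : sharp (Sharp Φ) = (Module.evalEquiv ℝ V).symm Φ := by
      rw [hSharp]; simp
    rw [h1, polarForm_comm, hsharp]
    simp
  have key := dualChar Q hQL Sharp hSharpPolar (Module.evalEquiv ℝ V v)
  have e2 : ∀ η : V →ₗ[ℝ] ℝ, (Module.evalEquiv ℝ V v) η = η v := fun η => by
    simp [Module.evalEquiv_apply, Module.Dual.eval_apply]
  have e1 : (Module.evalEquiv ℝ V v) (Sharp (Module.evalEquiv ℝ V v)) = q v := by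
    rw [e2]
    have h1 : Sharp (Module.evalEquiv ℝ V v) = sharp.symm v := by
      rw [hSharp]; simp [LinearEquiv.symm_apply_eq]
    rw [h1]
    have h2 := hsharp (sharp.symm v) v
    rw [sharp.apply_symm_apply] at h2
    rw [← h2, polarForm_self]
  rw [e1] at key
  rw [key]
  constructor
  · intro H ω h1 h2
    have h3 := H ω h1 (by rw [← hself]; exact h2)
    rwa [e2] at h3
  · intro H η h1 h2
    rw [e2]
    exact H η h1 (by rw [hself]; exact h2)

/-- Lemma 2.8(3): for Lorentzian quadratic forms `q, q′` on `V` (with musical isomorphisms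
`sharp`, `sharp′`, so that the dual forms are `q♯(ω) = ω(♯ω)` and `q′♯(ω) = ω(♯′ω)`),
the cone inclusion `q ⪯ q′` holds iff the reversed inclusion `q′♯ ⪯ q♯` holds on duals. -/
theorem cone_inclusion_iff_dual_cone_inclusion {n : ℕ} (hn : 1 ≤ n)
    {V : Type*} [AddCommGroup V] [Module ℝ V]
    (q q' : QuadraticForm ℝ V)
    (hq : IsLorentzian n ⇑q) (hq' : IsLorentzian n ⇑q')
    (sharp sharp' : (V →ₗ[ℝ] ℝ) ≃ₗ[ℝ] V)
    (hsharp : ∀ (ω : V →ₗ[ℝ] ℝ) (v : V), polarForm q (sharp ω) v = ω v)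
    (hsharp' : ∀ (ω : V →ₗ[ℝ] ℝ) (v : V), polarForm q' (sharp' ω) v = ω v) :
    ({v : V | q v < 0} ⊆ {v : V | q' v < 0}) ↔
      ({ω : V →ₗ[ℝ] ℝ | ω (sharp' ω) < 0} ⊆ {ω : V →ₗ[ℝ] ℝ | ω (sharp ω) < 0}) := by
  constructor
  · intro hC ω hω'
    exact (dualChar q hq sharp hsharp ω).mpr
      (fun v hv hqv => (dualChar q' hq' sharp' hsharp' ω).mp hω' v hv
        (nLem q q' hq hC v hv hqv))
  · intro hD v hv
    have hself : ∀ ω : V →ₗ[ℝ] ℝ,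
        ω (sharp ω) = q.comp (sharp : (V →ₗ[ℝ] ℝ) →ₗ[ℝ] V) ω :=
      self_eq_comp q sharp hsharp
    have hself' : ∀ ω : V →ₗ[ℝ] ℝ,
        ω (sharp' ω) = q'.comp (sharp' : (V →ₗ[ℝ] ℝ) →ₗ[ℝ] V) ω :=
      self_eq_comp q' sharp' hsharp'
    have hincl : {η : V →ₗ[ℝ] ℝ | q'.comp (sharp' : (V →ₗ[ℝ] ℝ) →ₗ[ℝ] V) η < 0}
        ⊆ {η : V →ₗ[ℝ] ℝ | q.comp (sharp : (V →ₗ[ℝ] ℝ) →ₗ[ℝ] V) η < 0} := by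
      intro η hη
      rw [Set.mem_setOf_eq, ← hself'] at hη
      rw [Set.mem_setOf_eq, ← hself]
      exact hD hη
    have hNd := nLem _ _ (comp_lorentzian q' hq' sharp') hincl
    refine (primalChar q' hq' sharp' hsharp' v).mpr ?_
    intro ω hω h1
    have h2 : ω (sharp ω) ≤ 0 := by
      rw [hself]
      exact hNd ω hω (by rw [← hself']; exact h1)
    exact (primalChar q hq sharp hsharp v).mp hv ω hω h2
end

section
/- Let q and q′ be Lorentzian quadratic forms on a real vector space V of dimension n+1 (n ≥ 1), let X be timelike for q and X′ timelike for q′, and let V^{q+} and V^{q′+} denote the corresponding future light cones (determined by X and X′ respectively). If V^{q+} ∩ V^{q′+} ≠ ∅, then there exist a Lorentzian quadratic form h on V and a vector Y timelike for h such that the future light cone V^{h+} of h determined by Y satisfies V^{h+} ⊆ V^{q+} ∩ V^{q′+}; in particular h ⪯ q and h ⪯ q′. (Pointwise core of Proposition 4.4: if the future cones of two globally hyperbolic metrics intersect at every point, one can fit a metric with smaller cones inside both.) -/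
open QuadraticMap

theorem mink_eq_neg_sq_add_sum_sq (n : ℕ) (x : Fin (n + 1) → ℝ) :
    mink n x = -x 0 ^ 2 + ∑ i : Fin n, x i.succ ^ 2 := by
  simp [mink, Fin.sum_univ_succ, Fin.succ_ne_zero]

theorem eq_zero_of_mink_add_eq {n : ℕ} {u y : Fin (n + 1) → ℝ} (hu : mink n u < 0)
    (horth : mink n (u + y) = mink n u + mink n y) (hy : mink n y ≤ 0) : y = 0 := by
  simp only [mink_eq_neg_sq_add_sum_sq, Pi.add_apply, add_sq, Finset.sum_add_distrib] at hu horth hy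
  set A := ∑ i : Fin n, u i.succ ^ 2
  set Y := ∑ i : Fin n, y i.succ ^ 2
  have hS : ∑ i : Fin n, u i.succ * y i.succ = u 0 * y 0 := by
    simp only [mul_assoc, ← Finset.mul_sum] at horth; linarith
  have hCS : (u 0 * y 0) ^ 2 ≤ A * Y := hS ▸ Finset.sum_mul_sq_le_sq_mul_sq _ _ _
  have hY : Y = 0 := by
    by_contra hne
    have hYpos : 0 < Y := lt_of_le_of_ne (by positivity) (Ne.symm hne)
    nlinarith [mul_lt_mul_of_pos_right (show A < u 0 ^ 2 by linarith) hYpos,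
      mul_le_mul_of_nonneg_left (show Y ≤ y 0 ^ 2 by linarith) (sq_nonneg (u 0))]
  have hy0 : y 0 = 0 := by
    have hu0 : u 0 ≠ 0 := fun h => by simp only [h] at hu; linarith [show 0 ≤ A by positivity]
    simpa [hY, hu0] using hCS
  have hsucc : ∀ i : Fin n, y i.succ = 0 := fun i =>
    pow_eq_zero_iff two_ne_zero |>.mp <|
      (Finset.sum_eq_zero_iff_of_nonneg fun j _ => sq_nonneg (y j.succ)).mp hY i (Finset.mem_univ i)
  funext i
  exact Fin.cases hy0 hsucc i

theorem QuadraticMap.continuous_of_finiteDimensional {E : Type*} [NormedAddCommGroup E]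
    [NormedSpace ℝ E] [FiniteDimensional ℝ E] (Q : QuadraticForm ℝ E) : Continuous Q := by
  let B : E →L[ℝ] E →L[ℝ] ℝ :=
    LinearMap.toContinuousLinearMap (LinearMap.toContinuousLinearMap.toLinearMap ∘ₗ associated Q)
  have hB : ⇑Q = fun x => B x x := funext fun x => (associated_eq_self_apply ℝ Q x).symm
  rw [hB]
  fun_prop

section

variable {V : Type*} [AddCommGroup V] [Module ℝ V]

theorem polarForm_eq_associated (q : QuadraticForm ℝ V) (v w : V) :
    polarForm q v w = associated q v w := by
  rw [polarForm, associated_apply]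
  simp [Module.End.smul_def]
  ring

theorem QuadraticForm.map_add_eq_add_two_mul_associated (q : QuadraticForm ℝ V) (x y : V) :
    q (x + y) = q x + q y + 2 * associated q x y := by
  rw [associated_apply]
  simp [Module.End.smul_def]

theorem QuadraticForm.exists_pos_map_smul_eq_neg_one {q : QuadraticForm ℝ V} {v : V}
    (hv : q v < 0) : ∃ a : ℝ, 0 < a ∧ q (a • v) = -1 := by
  have hs : 0 < √(-q v) := Real.sqrt_pos.mpr (neg_pos.mpr hv)
  refine ⟨(√(-q v))⁻¹, inv_pos.mpr hs, ?_⟩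
  rw [QuadraticMap.map_smul, smul_eq_mul, ← mul_inv, Real.mul_self_sqrt (neg_pos.mpr hv).le]
  field_simp [hv.ne]

theorem IsLorentzian.comp_linearEquiv {n : ℕ} {q : QuadraticForm ℝ V}
    (hq : IsLorentzian n ⇑q) (f : V ≃ₗ[ℝ] V) : IsLorentzian n ⇑(q.comp (f : V →ₗ[ℝ] V)) := by
  obtain ⟨e, he⟩ := hq
  exact ⟨e.trans f.symm, fun x => by simp [he]⟩

theorem IsLorentzian.eq_zero_of_associated_eq_zero {n : ℕ} {q : QuadraticForm ℝ V}
    (hq : IsLorentzian n ⇑q) {w y : V} (hw : q w < 0) (hwy : associated q w y = 0)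
    (hy : q y ≤ 0) : y = 0 := by
  obtain ⟨e, he⟩ := hq
  have hmink : ∀ v, mink n (e.symm v) = q v := fun v => by rw [← he, e.apply_symm_apply]
  suffices e.symm y = 0 by simpa using this
  refine eq_zero_of_mink_add_eq (by rwa [hmink]) ?_ (by rwa [hmink])
  rw [← map_add, hmink, hmink, hmink, QuadraticForm.map_add_eq_add_two_mul_associated, hwy,
    mul_zero, add_zero]

theorem eq_neg_smul_of_map_add_sq_nonpos {Q : QuadraticForm ℝ V} {w : V} (hw : Q w = -1)
    (hQ : ∀ y, associated Q w y = 0 → Q y ≤ 0 → y = 0) {x : V}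
    (hx : Q x + associated Q w x ^ 2 ≤ 0) : x = -associated Q w x • w := by
  have hLw : associated Q w w = -1 := (associated_eq_self_apply ℝ Q w).trans hw
  have hy : x + associated Q w x • w = 0 := by
    refine hQ _ ?_ ?_
    · simp [hLw]
    · rw [QuadraticForm.map_add_eq_add_two_mul_associated, QuadraticMap.map_smul, map_smul,
        associated_isSymm ℝ Q x w, hw, smul_eq_mul, smul_eq_mul]
      nlinarith
  rw [neg_smul]
  exact eq_neg_of_add_eq_zero_left hy

theorem mem_of_map_add_sq_nonpos {Q : QuadraticForm ℝ V} {w : V} (hw : Q w = -1)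
    (hQ : ∀ y, associated Q w y = 0 → Q y ≤ 0 → y = 0) {U : Set V}
    (hUcone : ∀ a : ℝ, 0 < a → ∀ x ∈ U, a • x ∈ U) (hwU : w ∈ U) {x : V} (hx0 : x ≠ 0)
    (hLx : associated Q w x ≤ 0) (hx : Q x + associated Q w x ^ 2 ≤ 0) : x ∈ U := by
  have hxw := eq_neg_smul_of_map_add_sq_nonpos hw hQ hx
  have hLx0 : associated Q w x ≠ 0 := fun h0 => hx0 (by rw [hxw, h0, neg_zero, zero_smul])
  rw [hxw]
  exact hUcone _ (neg_pos.mpr (lt_of_le_of_ne hLx hLx0)) w hwU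

def futureCone (q : QuadraticForm ℝ V) (X : V) : Set V :=
  {v | q v < 0 ∧ polarForm q X v < 0}

theorem smul_mem_futureCone {q : QuadraticForm ℝ V} {X v : V} {a : ℝ} (ha : 0 < a)
    (hv : v ∈ futureCone q X) : a • v ∈ futureCone q X := by
  simp only [futureCone, Set.mem_ofPred_eq, polarForm_eq_associated, QuadraticMap.map_smul,
    map_smul, smul_eq_mul] at hv ⊢
  exact ⟨mul_neg_of_pos_of_neg (by positivity) hv.1, mul_neg_of_pos_of_neg ha hv.2⟩

theorem isOpen_preimage_futureCone {E : Type*} [NormedAddCommGroup E] [NormedSpace ℝ E]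
    [FiniteDimensional ℝ E] (q : QuadraticForm ℝ V) (X : V) (f : E →ₗ[ℝ] V) :
    IsOpen (f ⁻¹' futureCone q X) := by
  have hq := (q.comp f).continuous_of_finiteDimensional
  have hX := (associated q X ∘ₗ f).continuous_of_finiteDimensional
  simp only [futureCone, Set.preimage_ofPred_eq, polarForm_eq_associated]
  exact (isOpen_lt hq continuous_const).and (isOpen_lt hX continuous_const)

theorem lt_zero_of_forall_map_nonpos {h q : QuadraticForm ℝ V} (L : V →ₗ[ℝ] ℝ)
    (hL : ∀ v, h v < 0 → L v ≤ 0 → q v < 0) {v : V} (hv : h v < 0) : q v < 0 := by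
  rcases le_total (L v) 0 with hLv | hLv
  · exact hL v hv hLv
  · simpa using hL (-v) (by simpa using hv) (by simpa using hLv)

section Squeeze

variable (q : QuadraticForm ℝ V) {w : V} (hw : q w = -1) {r : ℝ} (hr : r ≠ 0)

noncomputable def squeeze : V ≃ₗ[ℝ] V :=
  LinearEquiv.dilatransvection (f := (1 - r) • associated q w) (v := w) <| by
    simpa [associated_eq_self_apply, hw] using hr.isUnit

theorem squeeze_apply (x : V) :
    squeeze q hw hr x = x + ((1 - r) * associated q w x) • w :=
  LinearEquiv.dilatransvection.apply

theorem associated_squeeze (x : V) :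
    associated q w (squeeze q hw hr x) = r * associated q w x := by
  rw [squeeze_apply, map_add, map_smul, associated_eq_self_apply, hw, smul_eq_mul]
  ring

theorem squeeze_self : squeeze q hw hr w = r • w := by
  rw [squeeze_apply, associated_eq_self_apply, hw]
  module

theorem map_squeeze (x : V) :
    q (squeeze q hw hr x) = q x + (1 - r ^ 2) * associated q w x ^ 2 := by
  rw [squeeze_apply, QuadraticForm.map_add_eq_add_two_mul_associated, QuadraticMap.map_smul,
    map_smul, associated_isSymm ℝ q x w, hw, smul_eq_mul, smul_eq_mul]
  ring

theorem associated_comp_squeeze (x : V) :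
    associated (q.comp (squeeze q hw hr : V →ₗ[ℝ] V)) w x = r ^ 2 * associated q w x := by
  simp only [associated_comp, LinearMap.compl₁₂_apply, LinearEquiv.coe_coe, squeeze_self,
    map_smul, LinearMap.smul_apply, smul_eq_mul, associated_squeeze]
  ring

end Squeeze

end

theorem exists_squeezed_cone_subset {E : Type*} [NormedAddCommGroup E] [NormedSpace ℝ E]
    [FiniteDimensional ℝ E] {Q : QuadraticForm ℝ E} {w : E} (hw : Q w = -1)
    (hQ : ∀ y, associated Q w y = 0 → Q y ≤ 0 → y = 0) {U : Set E} (hU : IsOpen U)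
    (hUcone : ∀ a : ℝ, 0 < a → ∀ x ∈ U, a • x ∈ U) (hwU : w ∈ U) :
    ∃ r : ℝ, 0 < r ∧ r ≤ 1 ∧ ∀ v, Q v + (1 - r ^ 2) * associated Q w v ^ 2 < 0 →
      associated Q w v ≤ 0 → v ∈ U := by
  set L := associated Q w
  have hQc := Q.continuous_of_finiteDimensional
  have hLc : Continuous L := L.continuous_of_finiteDimensional
  set K := Metric.sphere (0 : E) 1 ∩ {x | L x ≤ 0} ∩ Uᶜ
  have hK : IsCompact K := ((isCompact_sphere 0 1).inter_right
    (isClosed_le hLc continuous_const)).inter_right hU.isClosed_compl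
  have hpos : ∀ x ∈ K, 0 < (Q x + L x ^ 2) / (1 + L x ^ 2) := by
    rintro x ⟨⟨hx1, hx2 : L x ≤ 0⟩, hx3⟩
    refine div_pos (not_le.mp fun hle => hx3 ?_) (by positivity)
    exact mem_of_map_add_sq_nonpos hw hQ hUcone hwU (by rintro rfl; simp at hx1) hx2 hle
  obtain ⟨δ, hδ, hδK⟩ := hK.exists_forall_le'
    (f := fun x => (Q x + L x ^ 2) / (1 + L x ^ 2))
    (by fun_prop (disch := intros; positivity)) hpos
  refine ⟨min 1 δ, lt_min one_pos hδ, min_le_left _ _, fun v hv hLv => ?_⟩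
  have hv0 : v ≠ 0 := by rintro rfl; simp at hv
  by_contra hvU
  set x := ‖v‖⁻¹ • v
  have hxK : x ∈ K := by
    refine ⟨⟨by simpa using norm_smul_inv_norm (𝕜 := ℝ) hv0, ?_⟩, fun hxU => hvU ?_⟩
    · simp only [Set.mem_ofPred_eq, x, map_smul, smul_eq_mul]
      exact mul_nonpos_of_nonneg_of_nonpos (by positivity) hLv
    · simpa [x, smul_smul, hv0] using hUcone ‖v‖ (norm_pos_iff.mpr hv0) x hxU
  have hx : Q x + (1 - min 1 δ ^ 2) * L x ^ 2 < 0 := by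
    have : Q x + (1 - min 1 δ ^ 2) * L x ^ 2
        = ‖v‖⁻¹ ^ 2 * (Q v + (1 - min 1 δ ^ 2) * L v ^ 2) := by
      simp only [x, QuadraticMap.map_smul, map_smul, smul_eq_mul]; ring
    rw [this]
    exact mul_neg_of_pos_of_neg (by positivity) hv
  have hδx := (le_div_iff₀ (by positivity)).mp (hδK x hxK)
  have hr : min 1 δ ^ 2 ≤ δ := by
    nlinarith [min_le_left 1 δ, min_le_right 1 δ, le_min zero_le_one hδ.le]
  nlinarith [sq_nonneg (L x)]

theorem exists_lorentzian_form_inside_future_cones_general {n : ℕ}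
    {V : Type*} [AddCommGroup V] [Module ℝ V]
    (q q' : QuadraticForm ℝ V)
    (hq : IsLorentzian n ⇑q)
    (X X' : V)
    (hne : ({v : V | q v < 0 ∧ polarForm q X v < 0} ∩
      {v : V | q' v < 0 ∧ polarForm q' X' v < 0}).Nonempty) :
    ∃ (h : QuadraticForm ℝ V) (Y : V),
      IsLorentzian n ⇑h ∧ h Y < 0 ∧
        {v : V | h v < 0 ∧ polarForm h Y v < 0} ⊆
          {v : V | q v < 0 ∧ polarForm q X v < 0} ∩
            {v : V | q' v < 0 ∧ polarForm q' X' v < 0} ∧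
        {v : V | h v < 0} ⊆ {v : V | q v < 0} ∧
        {v : V | h v < 0} ⊆ {v : V | q' v < 0} := by
  set T := futureCone q X ∩ futureCone q' X'
  have hTcone : ∀ b : ℝ, 0 < b → ∀ v ∈ T, b • v ∈ T := fun b hb v hv =>
    ⟨smul_mem_futureCone hb hv.1, smul_mem_futureCone hb hv.2⟩
  obtain ⟨w, hwT⟩ := hne
  obtain ⟨a, ha, hqw⟩ := QuadraticForm.exists_pos_map_smul_eq_neg_one hwT.1.1
  obtain ⟨e, he⟩ := id hq
  have hQ : IsLorentzian n ⇑(q.comp e.toLinearMap) := ⟨LinearEquiv.refl _ _, he⟩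
  obtain ⟨r, hr0, hr1, hsub⟩ := exists_squeezed_cone_subset (w := e.symm (a • w)) (U := e ⁻¹' T)
    (by simpa using hqw) (fun y => hQ.eq_zero_of_associated_eq_zero (by simp [hqw]))
    ((isOpen_preimage_futureCone q X e.toLinearMap).inter
      (isOpen_preimage_futureCone q' X' e.toLinearMap))
    (fun b hb x hx => by simpa using hTcone b hb _ hx) (by simpa using hTcone a ha w hwT)
  set h := q.comp (squeeze q hqw hr0.ne' : V →ₗ[ℝ] V)
  have hT : ∀ v, h v < 0 → associated q (a • w) v ≤ 0 → v ∈ T := fun v hv hLv => by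
    simpa using hsub (e.symm v) (by simpa [h, map_squeeze] using hv) (by simpa using hLv)
  refine ⟨h, a • w, hq.comp_linearEquiv _, ?_, fun v hv => hT v hv.1 ?_,
    fun v => lt_zero_of_forall_map_nonpos _ fun v hv hLv => (hT v hv hLv).1.1,
    fun v => lt_zero_of_forall_map_nonpos _ fun v hv hLv => (hT v hv hLv).2.1⟩
  · simp only [h, QuadraticMap.comp_apply, LinearEquiv.coe_coe, map_squeeze, hqw,
      associated_eq_self_apply]
    nlinarith
  · have hv2 := hv.2
    rw [polarForm_eq_associated, associated_comp_squeeze] at hv2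
    exact (neg_of_mul_neg_right hv2 (by positivity)).le

/-- Pointwise core of Proposition 4.4: if the future light cones of two Lorentzian forms
`q, q′` (determined by timelike vectors `X, X′`) intersect, then there is a Lorentzian
form `h` with a timelike vector `Y` whose future cone is contained in the intersection of
the two future cones; in particular `h ⪯ q` and `h ⪯ q′`. -/
theorem exists_lorentzian_form_inside_future_cones {n : ℕ} (hn : 1 ≤ n)
    {V : Type*} [AddCommGroup V] [Module ℝ V]
    (q q' : QuadraticForm ℝ V)
    (hq : IsLorentzian n ⇑q) (hq' : IsLorentzian n ⇑q')
    (X X' : V) (hX : q X < 0) (hX' : q' X' < 0)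
    (hne : ({v : V | q v < 0 ∧ polarForm q X v < 0} ∩
      {v : V | q' v < 0 ∧ polarForm q' X' v < 0}).Nonempty) :
    ∃ (h : QuadraticForm ℝ V) (Y : V),
      IsLorentzian n ⇑h ∧ h Y < 0 ∧
        {v : V | h v < 0 ∧ polarForm h Y v < 0} ⊆
          {v : V | q v < 0 ∧ polarForm q X v < 0} ∩
            {v : V | q' v < 0 ∧ polarForm q' X' v < 0} ∧
        {v : V | h v < 0} ⊆ {v : V | q v < 0} ∧
        {v : V | h v < 0} ⊆ {v : V | q' v < 0} :=
  exists_lorentzian_form_inside_future_cones_general q q' hq X X' hne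
end
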